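/- Let 0 < α < n, let Ψ be an Orlicz function with inverse Ψ^{-1}, R ≥ 1, x_R = (R, 0, …, 0) ∈ ℝ^n, and f_R = χ_{B(x_R,1)}. Then the Luxemburg norm of I_α f_R in the Orlicz space L^Ψ(ℝ^n) satisfies ‖I_α f_R‖_{L^Ψ(ℝ^n)} ≥ 2^{α−n} v_n / Ψ^{-1}(1/v_n), where v_n = π^{n/2}/Γ(n/2 + 1). -/

import Mathlib

/-!
Any two points of `B = B(x_R, 1)` are less than `2` apart and `α - n < 0`, so for `x ∈ B`,
`I_α χ_B (x) ≥ 2^{α-n} |B| = 2^{α-n} v_n`. Hence if `∫ Ψ(|I_α χ_B| / ε) ≤ 1`, then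
`v_n Ψ(2^{α-n} v_n / ε) ≤ 1`, and inverting `Ψ` gives `2^{α-n} v_n / ε ≤ Ψ⁻¹(1 / v_n)`.
-/

open MeasureTheory ENNReal

noncomputable section

/-- An Orlicz function: `Φ : [0,∞) → [0,∞)` strictly increasing, continuous,
convex, with `Φ(0) = 0`. -/
structure IsOrliczFunction (Φ : ℝ → ℝ) : Prop where
  zero : Φ 0 = 0
  strictMono : StrictMonoOn Φ (Set.Ici 0)
  continuous : ContinuousOn Φ (Set.Ici 0)
  convex : ConvexOn ℝ (Set.Ici 0) Φ

/-- `Φinv` is the inverse of the Orlicz function `Φ` on `[0,∞)`. -/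
def IsOrliczInverse (Φ Φinv : ℝ → ℝ) : Prop :=
  (∀ u : ℝ, 0 ≤ u → Φinv (Φ u) = u) ∧ (∀ v : ℝ, 0 ≤ v → 0 ≤ Φinv v ∧ Φ (Φinv v) = v)

/-- The Luxemburg-type functional
`‖f‖_{Φ,λ,B_r} = inf {ε > 0 : (1/|B_r|^λ) ∫_{B_r} Φ(|f(x)|/ε) dx ≤ 1}`
(for an extended-real-valued Young/Orlicz function `Φ`). -/
def luxNorm (n : ℕ) (Φ : ℝ → ℝ≥0∞) (lam r : ℝ)
    (f : EuclideanSpace ℝ (Fin n) → ℝ) : ℝ≥0∞ :=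
  sInf {ε : ℝ≥0∞ | ∃ e : ℝ, 0 < e ∧ ε = ENNReal.ofReal e ∧
    (∫⁻ x in Metric.ball (0 : EuclideanSpace ℝ (Fin n)) r, Φ (|f x| / e))
      ≤ ENNReal.ofReal
          ((volume (Metric.ball (0 : EuclideanSpace ℝ (Fin n)) r)).toReal ^ lam)}

/-- The central Morrey–Orlicz norm `‖f‖_{M^{Φ,λ}(0)} = sup_{r>0} ‖f‖_{Φ,λ,B_r}`. -/
def centralNorm (n : ℕ) (Φ : ℝ → ℝ≥0∞) (lam : ℝ)
    (f : EuclideanSpace ℝ (Fin n) → ℝ) : ℝ≥0∞ :=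
  ⨆ r : {r : ℝ // 0 < r}, luxNorm n Φ lam r.1 f

/-- Membership in the central Morrey–Orlicz space `M^{Φ,λ}(0)` for a real Orlicz
function `Φ`: `f ∈ L¹_loc(ℝⁿ)` and `‖f‖_{M^{Φ,λ}(0)} < ∞`. -/
def MemCentralMorreyOrlicz (n : ℕ) (Φ : ℝ → ℝ) (lam : ℝ)
    (f : EuclideanSpace ℝ (Fin n) → ℝ) : Prop :=
  LocallyIntegrable f volume ∧
    centralNorm n (fun u => ENNReal.ofReal (Φ u)) lam f < ⊤

/-- The Riesz potential `I_α f(x) = ∫_{ℝⁿ} f(y) |x-y|^{α-n} dy`. -/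
def rieszPotential (n : ℕ) (α : ℝ) (f : EuclideanSpace ℝ (Fin n) → ℝ)
    (x : EuclideanSpace ℝ (Fin n)) : ℝ :=
  ∫ y, f y * ‖x - y‖ ^ (α - (n : ℝ))

/-- The volume of the unit ball in ℝᵏ: v_k = π^{k/2} / Γ(k/2 + 1). -/
def unitBallVol (k : ℕ) : ℝ := Real.pi ^ ((k : ℝ) / 2) / Real.Gamma ((k : ℝ) / 2 + 1)

/-- The Luxemburg norm on the Orlicz space L^Ψ(ℝⁿ). -/
def orliczNorm (n : ℕ) (Ψ : ℝ → ℝ) (f : EuclideanSpace ℝ (Fin n) → ℝ) : ℝ≥0∞ :=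
  sInf {ε : ℝ≥0∞ | ∃ e : ℝ, 0 < e ∧ ε = ENNReal.ofReal e ∧
    (∫⁻ x, ENNReal.ofReal (Ψ (|f x| / e))) ≤ 1}

open Metric

lemma integrableOn_ball_rpow_norm_sub {E : Type*} [NormedAddCommGroup E] [NormedSpace ℝ E]
    [FiniteDimensional ℝ E] [MeasurableSpace E] [BorelSpace E] {μ : Measure E}
    [μ.IsAddHaarMeasure] (hd : 1 ≤ Module.finrank ℝ E) {s : ℝ}
    (hs : -(Module.finrank ℝ E : ℝ) < s) (x : E) (r : ℝ) :
    IntegrableOn (fun y => ‖x - y‖ ^ s) (ball x r) μ := by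
  have h0 : IntegrableOn (fun u : E => ‖u‖ ^ s) (ball 0 r) μ :=
    integrableOn_ball_of_norm_le_rpow (C := 1) (α := -s) hd (by linarith)
      (ae_of_all _ fun u => by simp [abs_of_nonneg (Real.rpow_nonneg (norm_nonneg u) s)])
      (measurable_norm.pow_const s).aestronglyMeasurable
  have hpre : (fun y => x - y) ⁻¹' ball 0 r = ball x r := by
    ext y; simp [dist_eq_norm, norm_sub_rev]
  rw [← hpre]
  exact ((Measure.measurePreserving_sub_left μ x).integrableOn_comp_preimage
    (Homeomorph.subLeft x).measurableEmbedding).2 h0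

section Euclidean

variable {n : ℕ}

lemma rieszPotential_indicator_ball_ge {α : ℝ} (hα0 : 0 < α) (hαn : α < n)
    {z x : EuclideanSpace ℝ (Fin n)} {r : ℝ} (hx : x ∈ ball z r) :
    (2 * r) ^ (α - n) * (volume (ball z r)).toReal ≤
      rieszPotential n α ((ball z r).indicator fun _ => (1 : ℝ)) x := by
  have hn : 0 < n := by exact_mod_cast hα0.trans hαn
  have : Nonempty (Fin n) := ⟨⟨0, hn⟩⟩
  have hB : ball z r ⊆ ball x (2 * r) := fun y hy => by
    have := dist_triangle_right y x z
    rw [mem_ball] at hx hy ⊢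
    linarith
  -- Only almost everywhere: at `y = x` the junk value `0 ^ (α - n) = 0` breaks the bound.
  have hbound : ∀ᵐ y, y ∈ ball z r → (2 * r) ^ (α - n) ≤ ‖x - y‖ ^ (α - n) := by
    filter_upwards [compl_mem_ae_iff.2 (measure_singleton x)] with y hyx hy
    have hxy : 0 < ‖x - y‖ := norm_pos_iff.2 (sub_ne_zero.2 (Ne.symm hyx))
    have hlt : ‖x - y‖ < 2 * r := by simpa [dist_eq_norm, norm_sub_rev] using hB hy
    exact Real.rpow_le_rpow_of_nonpos hxy hlt.le (by linarith)
  have hkernel : IntegrableOn (fun y => ‖x - y‖ ^ (α - n)) (ball z r) :=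
    (integrableOn_ball_rpow_norm_sub (by rw [finrank_euclideanSpace_fin]; exact hn)
      (by simpa using hα0) x (2 * r)).mono_set hB
  calc (2 * r) ^ (α - n) * (volume (ball z r)).toReal
      = ∫ _ in ball z r, (2 * r) ^ (α - n) := by
        rw [setIntegral_const, smul_eq_mul, mul_comm, measureReal_def]
    _ ≤ ∫ y in ball z r, ‖x - y‖ ^ (α - n) :=
        setIntegral_mono_on_ae (integrableOn_const measure_ball_lt_top.ne) hkernel
          measurableSet_ball hbound
    _ = rieszPotential n α ((ball z r).indicator fun _ => (1 : ℝ)) x := by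
        rw [rieszPotential, ← integral_indicator measurableSet_ball]
        congr 1 with y
        by_cases hy : y ∈ ball z r <;> simp [hy]

lemma ofReal_div_le_orliczNorm {Ψ Ψinv : ℝ → ℝ} (hΨ : StrictMonoOn Ψ (Set.Ici 0))
    (hΨinv : IsOrliczInverse Ψ Ψinv) {f : EuclideanSpace ℝ (Fin n) → ℝ}
    {S : Set (EuclideanSpace ℝ (Fin n))} (hS : MeasurableSet S) {c v : ℝ} (hc : 0 ≤ c)
    (hv : 0 < v) (hSv : volume S = ENNReal.ofReal v) (hfS : ∀ x ∈ S, c ≤ |f x|) :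
    ENNReal.ofReal (c / Ψinv (1 / v)) ≤ orliczNorm n Ψ f := by
  obtain ⟨hψ0, hΨψ⟩ := hΨinv.2 (1 / v) (by positivity)
  refine le_sInf ?_
  rintro _ ⟨e, he, rfl, hmodular⟩
  have hΨce : Ψ (c / e) * v ≤ 1 := by
    refine ENNReal.ofReal_le_one.1 ?_
    calc ENNReal.ofReal (Ψ (c / e) * v)
        = ∫⁻ _ in S, ENNReal.ofReal (Ψ (c / e)) := by
          rw [setLIntegral_const, hSv, ENNReal.ofReal_mul' hv.le]
      _ ≤ ∫⁻ x in S, ENNReal.ofReal (Ψ (|f x| / e)) :=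
          setLIntegral_mono' hS fun x hx => ENNReal.ofReal_le_ofReal <|
            hΨ.monotoneOn (Set.mem_Ici.2 (by positivity)) (Set.mem_Ici.2 (by positivity))
              (div_le_div_of_nonneg_right (hfS x hx) he.le)
      _ ≤ ∫⁻ x, ENNReal.ofReal (Ψ (|f x| / e)) := setLIntegral_le_lintegral _ _
      _ ≤ 1 := hmodular
  have hce : c / e ≤ Ψinv (1 / v) := by
    refine (hΨ.le_iff_le (Set.mem_Ici.2 (by positivity)) hψ0).1 ?_
    rw [hΨψ, le_div_iff₀ hv]
    exact hΨce
  refine ENNReal.ofReal_le_ofReal (div_le_of_le_mul₀ hψ0 he.le ?_)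
  rwa [div_le_iff₀ he, mul_comm] at hce

lemma unitBallVol_pos (n : ℕ) : 0 < unitBallVol n :=
  div_pos (Real.rpow_pos_of_pos Real.pi_pos _) (Real.Gamma_pos_of_pos (by positivity))

lemma volume_ball_one_eq_unitBallVol (hn : 0 < n) (x : EuclideanSpace ℝ (Fin n)) :
    volume (ball x 1) = ENNReal.ofReal (unitBallVol n) := by
  have : Nonempty (Fin n) := ⟨⟨0, hn⟩⟩
  rw [EuclideanSpace.volume_ball, Fintype.card_fin, ENNReal.ofReal_one, one_pow, one_mul,
    unitBallVol, Real.sqrt_eq_rpow, ← Real.rpow_natCast, ← Real.rpow_mul Real.pi_pos.le]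
  ring_nf

end Euclidean

theorem statement13_general (n : ℕ) (hn : 0 < n) (α : ℝ) (hα0 : 0 < α) (hαn : α < n)
    (Ψ Ψinv : ℝ → ℝ) (hΨ : IsOrliczFunction Ψ) (hΨinv : IsOrliczInverse Ψ Ψinv)
    (R : ℝ) :
    ENNReal.ofReal ((2 : ℝ) ^ (α - n) * unitBallVol n / Ψinv (1 / unitBallVol n))
      ≤ orliczNorm n Ψ (rieszPotential n α
          (Set.indicator (Metric.ball (EuclideanSpace.single (⟨0, hn⟩ : Fin n) R) 1)
            fun _ => (1 : ℝ))) := by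
  have hvol := volume_ball_one_eq_unitBallVol hn (EuclideanSpace.single ⟨0, hn⟩ R)
  refine ofReal_div_le_orliczNorm hΨ.strictMono hΨinv measurableSet_ball
    (mul_nonneg (by positivity) (unitBallVol_pos n).le) (unitBallVol_pos n) hvol fun x hx => ?_
  have hI := rieszPotential_indicator_ball_ge hα0 hαn hx
  rw [hvol, ENNReal.toReal_ofReal (unitBallVol_pos n).le, mul_one] at hI
  exact hI.trans (le_abs_self _)

/-- for R ≥ 1, x_R = (R,0,…,0) and f_R = χ_{B(x_R,1)},
one has ‖I_α f_R‖_{L^Ψ(ℝⁿ)} ≥ 2^{α-n} v_n / Ψ⁻¹(1/v_n). -/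
theorem statement13 (n : ℕ) (hn : 0 < n) (α : ℝ) (hα0 : 0 < α) (hαn : α < n)
    (Ψ Ψinv : ℝ → ℝ) (hΨ : IsOrliczFunction Ψ) (hΨinv : IsOrliczInverse Ψ Ψinv)
    (R : ℝ) (hR : 1 ≤ R) :
    ENNReal.ofReal ((2 : ℝ) ^ (α - n) * unitBallVol n / Ψinv (1 / unitBallVol n))
      ≤ orliczNorm n Ψ (rieszPotential n α
          (Set.indicator (Metric.ball (EuclideanSpace.single (⟨0, hn⟩ : Fin n) R) 1)
            fun _ => (1 : ℝ))) :=
  statement13_general n hn α hα0 hαn Ψ Ψinv hΨ hΨinv R
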